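/- arXiv:1411.7291 — 2 statements merged into one kernel-verified Lean document; each statement's English description precedes it below -/
import Mathlib

section
/- Let a_1, …, a_N be complex numbers and b_m = Σ_{nν = m, 1 ≤ n,ν ≤ N} a_n a_ν. Then Σ_{m=1}^{N²} |b_m|² ≤ N² Σ_{n,ν ≤ N} |a_n|² |a_ν|² / lcm(n,ν). -/
/-!
Bounding each product `|a_n a_ν| ≤ (|a_n|² + |a_ν|²) / 2` and using the symmetry `n ↔ ν` of
the factorisations of `m` gives `|b_m| ≤ S_m := ∑_{n ≤ N, n ∣ m} |a_n|²`. Squaring, `S_m²` is a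
sum of `|a_n|² |a_ν|²` over the pairs with `lcm(n, ν) ∣ m`, and each pair is counted for at most
`N² / lcm(n, ν)` values of `m ≤ N²`.
-/

open Finset

theorem Nat.norm_sum_divisorsAntidiagonal_mul_le {R : Type*} [NonUnitalSeminormedRing R]
    (f : ℕ → R) (m : ℕ) :
    ‖∑ d ∈ m.divisorsAntidiagonal, f d.1 * f d.2‖ ≤ ∑ d ∈ m.divisors, ‖f d‖ ^ 2 :=
  calc ‖∑ d ∈ m.divisorsAntidiagonal, f d.1 * f d.2‖
      ≤ ∑ d ∈ m.divisorsAntidiagonal, (‖f d.1‖ ^ 2 + ‖f d.2‖ ^ 2) / 2 :=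
        (norm_sum_le _ _).trans <| sum_le_sum fun d _ => (norm_mul_le _ _).trans <| by
          nlinarith [sq_nonneg (‖f d.1‖ - ‖f d.2‖)]
    _ = ∑ d ∈ m.divisors, ‖f d‖ ^ 2 := by
        rw [← sum_div, sum_add_distrib, Nat.sum_divisorsAntidiagonal (fun x _ => ‖f x‖ ^ 2),
          Nat.sum_divisorsAntidiagonal' (fun _ y => ‖f y‖ ^ 2)]
        ring

theorem Nat.sum_filter_product_mul_eq_sum_divisorsAntidiagonal {R : Type*} [CommSemiring R] (s : Finset ℕ) (f : ℕ → R)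
    {m : ℕ} (hm : m ≠ 0) :
    ∑ p ∈ s ×ˢ s with p.1 * p.2 = m, f p.1 * f p.2
      = ∑ d ∈ m.divisorsAntidiagonal,
          (if d.1 ∈ s then f d.1 else 0) * (if d.2 ∈ s then f d.2 else 0) := by
  simp_rw [ite_zero_mul_ite_zero, ← sum_filter]
  congr 1
  ext
  simp [hm, and_comm]

theorem Nat.sum_divisors_ite_mem {M : Type*} [AddCommMonoid M] (s : Finset ℕ) (f : ℕ → M)
    {m : ℕ} (hm : m ≠ 0) :
    ∑ d ∈ m.divisors, (if d ∈ s then f d else 0) = ∑ n ∈ s with n ∣ m, f n := by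
  rw [sum_ite_mem]
  congr 1
  ext
  simp [hm, and_comm]

theorem Nat.sum_Icc_sq_sum_filter_dvd {R : Type*} [CommSemiring R] (s : Finset ℕ) (g : ℕ → R)
    (M : ℕ) :
    ∑ m ∈ Icc 1 M, (∑ n ∈ s with n ∣ m, g n) ^ 2
      = ∑ n ∈ s, ∑ ν ∈ s, (M / n.lcm ν : ℕ) * (g n * g ν) := by
  simp_rw [sq, sum_filter, sum_mul_sum, ite_zero_mul_ite_zero, ← Nat.lcm_dvd_iff]
  rw [sum_comm]
  refine sum_congr rfl fun n _ => ?_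
  rw [sum_comm]
  refine sum_congr rfl fun ν _ => ?_
  rw [← sum_filter, sum_const, ← Nat.Ioc_filter_dvd_card_eq_div, ← Icc_add_one_left_eq_Ioc,
    zero_add, nsmul_eq_mul]

theorem Nat.cast_div_mul_le_mul_div {α : Type*} [Semifield α] [LinearOrder α]
    [IsStrictOrderedRing α] (M L : ℕ) {x : α} (hx : 0 ≤ x) :
    ((M / L : ℕ) : α) * x ≤ M * (x / L) := by
  rw [mul_div_left_comm, ← mul_div_assoc, mul_comm, mul_div_assoc]
  exact mul_le_mul_of_nonneg_left Nat.cast_div_le hx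

theorem stmt_8 (N : ℕ) (a : ℕ → ℂ) (b : ℕ → ℂ)
    (hb : ∀ m, b m = ∑ p ∈ (Finset.Icc 1 N ×ˢ Finset.Icc 1 N).filter
        (fun p => p.1 * p.2 = m), a p.1 * a p.2) :
    ∑ m ∈ Finset.Icc 1 (N ^ 2), ‖b m‖ ^ 2
      ≤ (N : ℝ) ^ 2 * ∑ n ∈ Finset.Icc 1 N, ∑ ν ∈ Finset.Icc 1 N,
          ‖a n‖ ^ 2 * ‖a ν‖ ^ 2 / (Nat.lcm n ν : ℝ) := by
  set A : ℕ → ℂ := fun n => if n ∈ Icc 1 N then a n else 0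
  have hb_le : ∀ m ≠ 0, ‖b m‖ ≤ ∑ n ∈ Icc 1 N with n ∣ m, ‖a n‖ ^ 2 := fun m hm =>
    calc ‖b m‖ = ‖∑ d ∈ m.divisorsAntidiagonal, A d.1 * A d.2‖ := by
          rw [hb, Nat.sum_filter_product_mul_eq_sum_divisorsAntidiagonal _ _ hm]
      _ ≤ ∑ d ∈ m.divisors, ‖A d‖ ^ 2 := Nat.norm_sum_divisorsAntidiagonal_mul_le A m
      _ = ∑ n ∈ Icc 1 N with n ∣ m, ‖a n‖ ^ 2 := by
          simp only [A, apply_ite (‖·‖ ^ 2), norm_zero]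
          rw [zero_pow two_ne_zero, Nat.sum_divisors_ite_mem _ _ hm]
  calc ∑ m ∈ Icc 1 (N ^ 2), ‖b m‖ ^ 2
      ≤ ∑ m ∈ Icc 1 (N ^ 2), (∑ n ∈ Icc 1 N with n ∣ m, ‖a n‖ ^ 2) ^ 2 := by
        gcongr with m hm
        exact hb_le m (by grind)
    _ = ∑ n ∈ Icc 1 N, ∑ ν ∈ Icc 1 N, ((N ^ 2 / n.lcm ν : ℕ) : ℝ) * (‖a n‖ ^ 2 * ‖a ν‖ ^ 2) :=
        Nat.sum_Icc_sq_sum_filter_dvd _ _ _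
    _ ≤ ∑ n ∈ Icc 1 N, ∑ ν ∈ Icc 1 N, (N : ℝ) ^ 2 * (‖a n‖ ^ 2 * ‖a ν‖ ^ 2 / n.lcm ν) := by
        refine sum_le_sum fun n _ => sum_le_sum fun ν _ => ?_
        exact_mod_cast Nat.cast_div_mul_le_mul_div (N ^ 2) (n.lcm ν)
          (by positivity : (0 : ℝ) ≤ ‖a n‖ ^ 2 * ‖a ν‖ ^ 2)
    _ = _ := by simp_rw [mul_sum]
end

section
/- Assume the mean-value asymptotics: (1/T)∫_0^T |Σ_{n=1}^N n^{-it}|² dt → N and (1/T)∫_0^T |Σ_{n=1}^N n^{-it}|⁴ dt → S(N) as T → ∞, where S(N) = #{(n,ν,μ,λ) ∈ [1,N]⁴ : nν = μλ} ≤ C N² log N for N ≥ 2 and some absolute constant C. Then for each 0 < r < 2 there is a constant C_r > 0 such that liminf_{T→∞} ((1/T)∫_0^T |Σ_{n=1}^N n^{-it}|^r dt)^{1/r} ≥ C_r N^{1/2} / (log N)^{1/r - 1/2} for all N ≥ 2. -/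
/-!
By Hölder's inequality the second moment of `|D|` interpolates between its `r`-th and fourth
moments, `∫ |D|² ≤ (∫ |D|^r)^(2/(4-r)) (∫ |D|⁴)^((2-r)/(4-r))`, which rearranges to
`∫ |D|^r ≥ (∫ |D|²)^((4-r)/2) / (∫ |D|⁴)^((2-r)/2)`. For the averages over `(0, T]` the right-hand
side tends to `N^((4-r)/2) / S(N)^((2-r)/2) ≥ C^(-(2-r)/2) N^(r/2) / (log N)^((2-r)/2)`, and taking
`r`-th roots gives the bound. Since `|D| ≤ N` these averages are bounded, which is what makes the
real `liminf` dominate the limit of the lower bounds.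
-/

open MeasureTheory Filter Real ProbabilityTheory

section Interpolation

variable {α : Type*} [MeasurableSpace α] {μ : Measure α} [IsFiniteMeasure μ] {g : α → ℝ} {M : ℝ}

lemma memLp_rpow_of_le (hgm : AEMeasurable g μ) (hg0 : 0 ≤ᵐ[μ] g) (hgM : ∀ᵐ x ∂μ, g x ≤ M)
    {s : ℝ} (hs : 0 ≤ s) (p : ENNReal) : MemLp (fun x => g x ^ s) p μ :=
  MemLp.of_bound (hgm.pow_const s).aestronglyMeasurable (M ^ s) <| by
    filter_upwards [hg0, hgM] with x h0 hM
    rw [Real.norm_of_nonneg (rpow_nonneg h0 s)]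
    exact rpow_le_rpow h0 hM hs

lemma integral_rpow_le_interpolation (hgm : AEMeasurable g μ) (hg0 : 0 ≤ᵐ[μ] g)
    (hgM : ∀ᵐ x ∂μ, g x ≤ M) {a b c : ℝ} (ha : 0 ≤ a) (hab : a < b) (hbc : b < c) :
    ∫ x, g x ^ b ∂μ ≤
      (∫ x, g x ^ a ∂μ) ^ ((c - b) / (c - a)) * (∫ x, g x ^ c ∂μ) ^ ((b - a) / (c - a)) := by
  set p := (c - a) / (c - b)
  set q := (c - a) / (b - a)
  have hca : 0 < c - a := by linarith
  have hcb : 0 < c - b := by linarith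
  have hba : 0 < b - a := by linarith
  have hpq : p.HolderConjugate q := by
    rw [Real.holderConjugate_iff]
    refine ⟨(one_lt_div hcb).2 (by linarith), ?_⟩
    simp only [p, q]
    field_simp
    ring
  have hp : 0 < p := div_pos hca hcb
  have hq : 0 < q := div_pos hca hba
  -- Hölder with exponents `p`, `q` applied to the splitting `g ^ b = g ^ (a / p) * g ^ (c / q)`
  have hexp : a / p + c / q = b := by
    simp only [p, q]
    field_simp
    ring
  have hsplit : ∀ᵐ x ∂μ, g x ^ (a / p) * g x ^ (c / q) = g x ^ b := by
    filter_upwards [hg0] with x hx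
    rw [← rpow_add' hx (by linarith), hexp]
  have hpow : ∀ {s t : ℝ}, 0 < t → ∀ᵐ x ∂μ, (g x ^ (s / t)) ^ t = g x ^ s := fun ht => by
    filter_upwards [hg0] with x hx
    rw [← rpow_mul hx, div_mul_cancel₀ _ ht.ne']
  have holder := integral_mul_le_Lp_mul_Lq_of_nonneg hpq
    (hg0.mono fun x hx => rpow_nonneg hx (a / p)) (hg0.mono fun x hx => rpow_nonneg hx (c / q))
    (memLp_rpow_of_le hgm hg0 hgM (div_nonneg ha hp.le) _)
    (memLp_rpow_of_le hgm hg0 hgM (div_nonneg (by linarith) hq.le) _)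
  rw [integral_congr_ae hsplit, integral_congr_ae (hpow hp), integral_congr_ae (hpow hq)] at holder
  simpa only [p, q, one_div_div] using holder

lemma rpow_integral_div_le_integral_rpow (hgm : AEMeasurable g μ) (hg0 : 0 ≤ᵐ[μ] g)
    (hgM : ∀ᵐ x ∂μ, g x ≤ M) {a b c : ℝ} (ha : 0 ≤ a) (hab : a < b) (hbc : b < c) :
    (∫ x, g x ^ b ∂μ) ^ ((c - a) / (c - b)) / (∫ x, g x ^ c ∂μ) ^ ((b - a) / (c - b)) ≤
      ∫ x, g x ^ a ∂μ := by
  have hca : 0 < c - a := by linarith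
  have hcb : 0 < c - b := by linarith
  have hA : 0 ≤ ∫ x, g x ^ a ∂μ := integral_nonneg_of_ae <| hg0.mono fun x hx => rpow_nonneg hx a
  have hB : 0 ≤ ∫ x, g x ^ b ∂μ := integral_nonneg_of_ae <| hg0.mono fun x hx => rpow_nonneg hx b
  have hC : 0 ≤ ∫ x, g x ^ c ∂μ := integral_nonneg_of_ae <| hg0.mono fun x hx => rpow_nonneg hx c
  rcases hC.eq_or_lt with hC0 | hCpos
  · rw [← hC0, zero_rpow (div_pos (by linarith) hcb).ne', div_zero]
    exact hA
  rw [div_le_iff₀ (rpow_pos_of_pos hCpos _)]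
  calc (∫ x, g x ^ b ∂μ) ^ ((c - a) / (c - b))
      ≤ ((∫ x, g x ^ a ∂μ) ^ ((c - b) / (c - a)) * (∫ x, g x ^ c ∂μ) ^ ((b - a) / (c - a))) ^
          ((c - a) / (c - b)) :=
        rpow_le_rpow hB (integral_rpow_le_interpolation hgm hg0 hgM ha hab hbc) (by positivity)
    _ = (∫ x, g x ^ a ∂μ) * (∫ x, g x ^ c ∂μ) ^ ((b - a) / (c - b)) := by
        rw [mul_rpow (by positivity) (by positivity), ← rpow_mul hA, ← rpow_mul hC,
          div_mul_div_cancel₀ hca.ne', div_self hcb.ne', rpow_one,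
          div_mul_div_cancel₀ hca.ne']

end Interpolation

lemma integral_cond {α : Type*} [MeasurableSpace α] (μ : Measure α) (s : Set α) (f : α → ℝ) :
    ∫ x, f x ∂μ[|s] = (μ.real s)⁻¹ * ∫ x in s, f x ∂μ := by
  rw [ProbabilityTheory.cond, integral_smul_measure, ENNReal.toReal_inv, smul_eq_mul]
  rfl

section AverageIoc

variable {g : ℝ → ℝ} {M r T : ℝ}

-- `volume[|(0, T]]` is the uniform probability on `(0, T]`: it turns `(1 / T) ∫_0^T` into an integral.
lemma integral_cond_Ioc (hT : 0 < T) (f : ℝ → ℝ) :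
    ∫ t, f t ∂volume[|Set.Ioc 0 T] = (1 / T) * ∫ t in Set.Ioc 0 T, f t := by
  rw [integral_cond, volume_real_Ioc_of_le hT.le, sub_zero, one_div]

lemma isProbabilityMeasure_cond_Ioc (hT : 0 < T) : IsProbabilityMeasure volume[|Set.Ioc 0 T] :=
  cond_isProbabilityMeasure_of_finite (by simp [hT]) (by simp)

lemma average_Ioc_interpolation (hgm : AEMeasurable g) (hg0 : ∀ t, 0 ≤ g t) (hgM : ∀ t, g t ≤ M)
    (hr0 : 0 < r) (hr2 : r < 2) (hT : 0 < T) :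
    (((1 / T) * ∫ t in Set.Ioc 0 T, g t ^ 2) ^ ((4 - r) / 2) /
        ((1 / T) * ∫ t in Set.Ioc 0 T, g t ^ 4) ^ ((2 - r) / 2)) ^ (1 / r) ≤
      ((1 / T) * ∫ t in Set.Ioc 0 T, g t ^ r) ^ (1 / r) := by
  have := isProbabilityMeasure_cond_Ioc hT
  have key := rpow_integral_div_le_integral_rpow (μ := volume[|Set.Ioc 0 T]) (g := g) (M := M)
    (hgm.restrict.smul_measure _) (ae_of_all _ hg0) (ae_of_all _ hgM) hr0.le hr2
    (by norm_num : (2 : ℝ) < 4)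
  rw [← integral_cond_Ioc hT, ← integral_cond_Ioc hT, ← integral_cond_Ioc hT]
  norm_num at key
  exact rpow_le_rpow (by positivity) key (by positivity)

lemma average_Ioc_rpow_rpow_le (hg0 : ∀ t, 0 ≤ g t) (hgM : ∀ t, g t ≤ M) (hr0 : 0 < r)
    (hT : 0 < T) : ((1 / T) * ∫ t in Set.Ioc 0 T, g t ^ r) ^ (1 / r) ≤ M := by
  have := isProbabilityMeasure_cond_Ioc hT
  have hM : 0 ≤ M := (hg0 0).trans (hgM 0)
  have hint : ∫ t, g t ^ r ∂volume[|Set.Ioc 0 T] ≤ M ^ r :=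
    calc _ ≤ ∫ _, M ^ r ∂volume[|Set.Ioc 0 T] :=
          integral_mono_of_nonneg (ae_of_all _ fun t => rpow_nonneg (hg0 t) r)
            (integrable_const _) (ae_of_all _ fun t => rpow_le_rpow (hg0 t) (hgM t) hr0.le)
      _ = M ^ r := by simp
  rw [← integral_cond_Ioc hT]
  calc (∫ t, g t ^ r ∂volume[|Set.Ioc 0 T]) ^ (1 / r) ≤ (M ^ r) ^ (1 / r) :=
        rpow_le_rpow (integral_nonneg fun t => rpow_nonneg (hg0 t) r) hint (by positivity)
    _ = M := by rw [← rpow_mul hM, mul_one_div_cancel hr0.ne', rpow_one]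

end AverageIoc

lemma norm_sum_Icc_natCast_cpow_le (N : ℕ) (t : ℝ) :
    ‖∑ n ∈ Finset.Icc 1 N, (n : ℂ) ^ (-(Complex.I * t))‖ ≤ N := by
  calc ‖∑ n ∈ Finset.Icc 1 N, (n : ℂ) ^ (-(Complex.I * t))‖
      ≤ ∑ n ∈ Finset.Icc 1 N, ‖(n : ℂ) ^ (-(Complex.I * t))‖ := norm_sum_le _ _
    _ = ∑ n ∈ Finset.Icc 1 N, (1 : ℝ) := by
        refine Finset.sum_congr rfl fun n hn => ?_
        rw [Complex.norm_natCast_cpow_of_pos (Finset.mem_Icc.1 hn).1]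
        simp
    _ = N := by simp

lemma continuous_sum_Icc_natCast_cpow (N : ℕ) :
    Continuous fun t : ℝ => ∑ n ∈ Finset.Icc 1 N, (n : ℂ) ^ (-(Complex.I * t)) := by
  refine continuous_finsetSum _ fun n hn => ?_
  have hn0 : (n : ℂ) ≠ 0 := Nat.cast_ne_zero.2 (by grind)
  exact (continuous_const.mul Complex.continuous_ofReal).neg.const_cpow (Or.inl hn0)

lemma le_liminf_of_tendsto_of_eventually_le {ι : Type*} {l : Filter ι} [l.NeBot] {u v : ι → ℝ}
    {L B : ℝ} (hu : Tendsto u l (nhds L)) (huv : ∀ᶠ i in l, u i ≤ v i)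
    (hvB : ∀ᶠ i in l, v i ≤ B) : L ≤ liminf v l := by
  rw [← hu.liminf_eq]
  exact liminf_le_liminf huv hu.isBoundedUnder_ge (isCoboundedUnder_ge_of_eventually_le l hvB)

lemma rpow_neg_mul_rpow_div_rpow_le {x y ℓ K r : ℝ} (hx : 0 < x) (hℓ : 0 < ℓ) (hK : 0 < K)
    (hy : 0 < y) (hr0 : 0 < r) (hr2 : r ≤ 2) (hyle : y ≤ K * x ^ 2 * ℓ) :
    K ^ (-(1 / r - 1 / 2)) * x ^ (1 / 2 : ℝ) / ℓ ^ (1 / r - 1 / 2) ≤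
      (x ^ ((4 - r) / 2) / y ^ ((2 - r) / 2)) ^ (1 / r) := by
  have he : 0 ≤ 1 / r - 1 / 2 := sub_nonneg.2 (one_div_le_one_div_of_le hr0 hr2)
  calc K ^ (-(1 / r - 1 / 2)) * x ^ (1 / 2 : ℝ) / ℓ ^ (1 / r - 1 / 2)
      = x ^ (1 / 2 + 2 * (1 / r - 1 / 2)) / (K * x ^ 2 * ℓ) ^ (1 / r - 1 / 2) := by
        rw [mul_rpow (by positivity) hℓ.le, mul_rpow hK.le (by positivity), ← rpow_natCast,
          ← rpow_mul hx.le, rpow_add hx, rpow_neg hK.le]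
        push_cast
        field_simp
    _ ≤ x ^ (1 / 2 + 2 * (1 / r - 1 / 2)) / y ^ (1 / r - 1 / 2) := by gcongr
    _ = (x ^ ((4 - r) / 2) / y ^ ((2 - r) / 2)) ^ (1 / r) := by
        rw [div_rpow (by positivity) (by positivity), ← rpow_mul hx.le, ← rpow_mul hy.le]
        congr 2
        · field_simp
          ring
        · field_simp

theorem stmt_10 (C : ℝ)
    (S : ℕ → ℕ)
    (hSdef : ∀ N, S N =
      (((Finset.Icc 1 N ×ˢ Finset.Icc 1 N) ×ˢ (Finset.Icc 1 N ×ˢ Finset.Icc 1 N)).filter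
        (fun q => q.1.1 * q.1.2 = q.2.1 * q.2.2)).card)
    (h2 : ∀ N : ℕ, Tendsto
      (fun T : ℝ => (1 / T) * ∫ t in Set.Ioc (0 : ℝ) T,
        ‖∑ n ∈ Finset.Icc 1 N, (n : ℂ) ^ (-(Complex.I * (t : ℂ)))‖ ^ 2)
      atTop (nhds (N : ℝ)))
    (h4 : ∀ N : ℕ, Tendsto
      (fun T : ℝ => (1 / T) * ∫ t in Set.Ioc (0 : ℝ) T,
        ‖∑ n ∈ Finset.Icc 1 N, (n : ℂ) ^ (-(Complex.I * (t : ℂ)))‖ ^ 4)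
      atTop (nhds (S N : ℝ)))
    (hS : ∀ N : ℕ, 2 ≤ N → (S N : ℝ) ≤ C * (N : ℝ) ^ 2 * Real.log N) :
    ∀ r : ℝ, 0 < r → r < 2 → ∃ Cr : ℝ, 0 < Cr ∧ ∀ N : ℕ, 2 ≤ N →
      Cr * (N : ℝ) ^ ((1 : ℝ) / 2) / (Real.log N) ^ (1 / r - 1 / 2)
        ≤ liminf (fun T : ℝ => ((1 / T) * ∫ t in Set.Ioc (0 : ℝ) T,
            ‖∑ n ∈ Finset.Icc 1 N, (n : ℂ) ^ (-(Complex.I * (t : ℂ)))‖ ^ r) ^ (1 / r)) atTop := by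
  intro r hr0 hr2
  refine ⟨(max C 1) ^ (-(1 / r - 1 / 2)), by positivity, fun N hN => ?_⟩
  have hgm := (continuous_sum_Icc_natCast_cpow N).norm.aemeasurable (μ := volume)
  have hg0 := fun t : ℝ => norm_nonneg (∑ n ∈ Finset.Icc 1 N, (n : ℂ) ^ (-(Complex.I * t)))
  have hgN := norm_sum_Icc_natCast_cpow_le N
  have hSN : (0 : ℝ) < S N := by
    rw [hSdef]
    exact_mod_cast Finset.card_pos.2 ⟨((1, 1), (1, 1)), by simp; omega⟩
  have hlim := (((h2 N).rpow_const (Or.inr (by linarith : 0 ≤ (4 - r) / 2))).div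
    ((h4 N).rpow_const (Or.inr (by linarith : 0 ≤ (2 - r) / 2))) (by positivity)).rpow_const
    (Or.inr (by positivity : 0 ≤ 1 / r))
  calc (max C 1) ^ (-(1 / r - 1 / 2)) * (N : ℝ) ^ (1 / 2 : ℝ) / Real.log N ^ (1 / r - 1 / 2)
      ≤ ((N : ℝ) ^ ((4 - r) / 2) / (S N : ℝ) ^ ((2 - r) / 2)) ^ (1 / r) :=
        rpow_neg_mul_rpow_div_rpow_le (by positivity) (Real.log_pos (by exact_mod_cast hN))
          (by positivity) hSN hr0 hr2.le ((hS N hN).trans (by gcongr; exact le_max_left C 1))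
    _ ≤ _ := le_liminf_of_tendsto_of_eventually_le hlim
        ((eventually_gt_atTop 0).mono fun T hT => average_Ioc_interpolation hgm hg0 hgN hr0 hr2 hT)
        ((eventually_gt_atTop 0).mono fun T hT => average_Ioc_rpow_rpow_le hg0 hgN hr0 hT)
end
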